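/- (Hamkins–Löwe buttons-and-switches theorem, as used in the paper.) Let W be a type with a preorder ≤ (a potentialist frame), with Kripke satisfaction taken with respect to ≤. Suppose that for every natural number n there are a world w₀ⁿ ∈ W and a family Fₙ consisting of n buttons and n switches that is independent at w₀ⁿ. Let φ be a modal formula such that for every n and every valuation V assigning to each atomic proposition a pointwise (finite) Boolean combination of the members of Fₙ, φ is satisfied at every world of W. Then φ belongs to S4.2. -/

import Mathlib

/-!
If `φ ∉ S4.2`, filtering the canonical model through the subformulas of `φ` yields a finite
directed preorder `F` with a root at which `φ` fails. Take `|F|` buttons and switches and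
label each world above `w₀` by an element of `F`: the pushed buttons name some elements of `F`;
while these and the root form a chain the label is a largest of them, and afterwards it lies in
the final cluster; the switches select which such element. Persistence of buttons makes the
labelling monotone and independence lets every move in `F` be realised, so it is a p-morphism
onto `F` sending `w₀` to the root. A valuation pulled back along it depends only on the
buttons and switches, hence is a Boolean combination of them, and `φ` fails at `w₀`.
-/

/-- Propositional modal formulas: atoms, falsum, implication, and box. -/
inductive ModalFormula : Type
  | atom : ℕ → ModalFormula
  | falsum : ModalFormula
  | imp : ModalFormula → ModalFormula → ModalFormula
  | box : ModalFormula → ModalFormula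

/-- Kripke satisfaction at a world, relative to a frame relation `R` and a
valuation `V`. -/
def ModalSat {W : Type*} (R : W → W → Prop) (V : ℕ → W → Prop) :
    W → ModalFormula → Prop
  | w, .atom n => V n w
  | _, .falsum => False
  | w, .imp φ ψ => ModalSat R V w φ → ModalSat R V w ψ
  | w, .box φ => ∀ v, R w v → ModalSat R V v φ

/-- A formula is valid on the frame `(W, R)` if it is satisfied at every world
under every valuation. -/
def ValidOn {W : Type*} (R : W → W → Prop) (φ : ModalFormula) : Prop :=
  ∀ (V : ℕ → W → Prop) (w : W), ModalSat R V w φ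

/-- `φ` is a substitution instance of a classical propositional tautology:
it evaluates to `true` under every Boolean evaluation of formulas that
respects falsum and implication (atoms and boxed formulas may be evaluated
arbitrarily). -/
def TautologyInstance (φ : ModalFormula) : Prop :=
  ∀ e : ModalFormula → Bool,
    e .falsum = false →
    (∀ ψ χ, e (.imp ψ χ) = (!(e ψ) || e χ)) →
    e φ = true

namespace ModalFormula
/-- Negation: `¬φ := φ → ⊥`. -/
def neg (φ : ModalFormula) : ModalFormula := .imp φ .falsum
/-- Possibility: `◇φ := ¬□¬φ`. -/
def dia (φ : ModalFormula) : ModalFormula := neg (.box (neg φ))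
/-- Conjunction, defined classically from `→` and `⊥`. -/
def conj (φ ψ : ModalFormula) : ModalFormula := neg (.imp φ (neg ψ))
/-- Disjunction, defined classically from `→` and `⊥`. -/
def disj (φ ψ : ModalFormula) : ModalFormula := .imp (neg φ) ψ
end ModalFormula
/-- The modal logic S4.2: S4 together with all instances of
`.2 : ◇□φ → □◇φ`. -/
inductive S4Point2 : ModalFormula → Prop
  | taut {φ} : TautologyInstance φ → S4Point2 φ
  | axK (φ ψ) : S4Point2 (.imp (.box (.imp φ ψ)) (.imp (.box φ) (.box ψ)))
  | axT (φ) : S4Point2 (.imp (.box φ) φ)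
  | ax4 (φ) : S4Point2 (.imp (.box φ) (.box (.box φ)))
  | ax2 (φ) : S4Point2 (.imp (.dia (.box φ)) (.box (.dia φ)))
  | mp {φ ψ} : S4Point2 (.imp φ ψ) → S4Point2 φ → S4Point2 ψ
  | nec {φ} : S4Point2 φ → S4Point2 (.box φ)

namespace ModalFormula

def subformulas : ModalFormula → Set ModalFormula
  | atom n => {atom n}
  | falsum => {falsum}
  | imp φ ψ => insert (imp φ ψ) (subformulas φ ∪ subformulas ψ)
  | box φ => insert (box φ) (subformulas φ)

theorem mem_subformulas_self (φ : ModalFormula) : φ ∈ φ.subformulas := by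
  cases φ <;> simp [subformulas]

theorem finite_subformulas (φ : ModalFormula) : φ.subformulas.Finite := by
  induction φ with
  | atom _ | falsum => exact Set.finite_singleton _
  | imp φ ψ hφ hψ => exact (hφ.union hψ).insert _
  | box φ hφ => exact hφ.insert _

theorem subformulas_subset {φ ψ : ModalFormula} (h : ψ ∈ φ.subformulas) :
    ψ.subformulas ⊆ φ.subformulas := by
  induction φ with
  | atom _ | falsum => simp only [subformulas, Set.mem_singleton_iff] at h; rw [h]
  | imp φ₁ φ₂ ih₁ ih₂ =>
    simp only [subformulas, Set.mem_insert_iff, Set.mem_union] at h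
    rcases h with rfl | h | h
    · rfl
    · exact (ih₁ h).trans (Set.subset_union_left.trans (Set.subset_insert _ _))
    · exact (ih₂ h).trans (Set.subset_union_right.trans (Set.subset_insert _ _))
  | box φ ih =>
    simp only [subformulas, Set.mem_insert_iff] at h
    rcases h with rfl | h
    · rfl
    · exact (ih h).trans (Set.subset_insert _ _)

theorem mem_subformulas_of_imp {φ ψ χ : ModalFormula} (h : imp ψ χ ∈ φ.subformulas) :
    ψ ∈ φ.subformulas ∧ χ ∈ φ.subformulas :=
  ⟨subformulas_subset h (by simp [subformulas, mem_subformulas_self]),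
    subformulas_subset h (by simp [subformulas, mem_subformulas_self])⟩

theorem mem_subformulas_of_box {φ ψ : ModalFormula} (h : box ψ ∈ φ.subformulas) :
    ψ ∈ φ.subformulas :=
  subformulas_subset h (by simp [subformulas, mem_subformulas_self])

end ModalFormula

open ModalFormula

inductive DerivableFrom (Γ : Set ModalFormula) : ModalFormula → Prop
  | mem {φ} : φ ∈ Γ → DerivableFrom Γ φ
  | thm {φ} : S4Point2 φ → DerivableFrom Γ φ
  | mp {φ ψ} : DerivableFrom Γ (imp φ ψ) → DerivableFrom Γ φ → DerivableFrom Γ ψ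

namespace DerivableFrom

variable {Γ Δ : Set ModalFormula} {φ ψ χ : ModalFormula}

theorem of_taut (h : TautologyInstance (imp φ ψ)) (hφ : DerivableFrom Γ φ) :
    DerivableFrom Γ ψ :=
  mp (thm (.taut h)) hφ

theorem of_taut₂ (h : TautologyInstance (imp φ (imp ψ χ))) (hφ : DerivableFrom Γ φ)
    (hψ : DerivableFrom Γ ψ) : DerivableFrom Γ χ :=
  mp (of_taut h hφ) hψ

theorem mono (h : DerivableFrom Γ φ) (hΓΔ : Γ ⊆ Δ) : DerivableFrom Δ φ := by
  induction h with
  | mem h => exact mem (hΓΔ h)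
  | thm h => exact thm h
  | mp _ _ ih₁ ih₂ => exact mp ih₁ ih₂

theorem deduction (h : DerivableFrom (insert φ Γ) ψ) : DerivableFrom Γ (imp φ ψ) := by
  induction h with
  | @mem ψ h =>
    rcases h with rfl | h
    · exact thm (.taut fun e _ h₁ => by simp only [h₁]; grind)
    · exact of_taut (fun e _ h₁ => by simp only [h₁]; grind) (mem h)
  | thm h => exact of_taut (fun e _ h₁ => by simp only [h₁]; grind) (thm h)
  | mp _ _ ih₁ ih₂ => exact of_taut₂ (fun e _ h₁ => by simp only [h₁]; grind) ih₁ ih₂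

theorem s4Point2 (h : DerivableFrom ∅ φ) : S4Point2 φ := by
  induction h with
  | mem h => exact absurd h (Set.notMem_empty _)
  | thm h => exact h
  | mp _ _ ih₁ ih₂ => exact .mp ih₁ ih₂

theorem box (h : DerivableFrom Γ φ) : DerivableFrom (box '' Γ) (box φ) := by
  induction h with
  | mem h => exact mem (Set.mem_image_of_mem _ h)
  | thm h => exact thm (.nec h)
  | mp _ _ ih₁ ih₂ => exact mp (mp (thm (.axK _ _)) ih₁) ih₂

theorem exists_of_union {A B : Set ModalFormula} (h : DerivableFrom (A ∪ B) φ) :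
    ∃ χ, DerivableFrom A χ ∧ DerivableFrom B (imp χ φ) := by
  have htop : DerivableFrom A (neg falsum) :=
    thm (.taut fun e h₀ h₁ => by simp only [neg, h₁, h₀]; rfl)
  induction h with
  | @mem φ h =>
    rcases h with h | h
    · exact ⟨φ, mem h, thm (.taut fun e _ h₁ => by simp only [h₁]; grind)⟩
    · exact ⟨_, htop, of_taut (fun e _ h₁ => by simp only [h₁]; grind) (mem h)⟩
  | thm h => exact ⟨_, htop, of_taut (fun e _ h₁ => by simp only [h₁]; grind) (thm h)⟩
  | mp _ _ ih₁ ih₂ =>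
    obtain ⟨χ₁, hA₁, hB₁⟩ := ih₁
    obtain ⟨χ₂, hA₂, hB₂⟩ := ih₂
    exact ⟨conj χ₁ χ₂,
      of_taut₂ (fun e h₀ h₁ => by simp only [conj, neg, h₁, h₀]; grind) hA₁ hA₂,
      of_taut₂ (fun e h₀ h₁ => by simp only [conj, neg, h₁, h₀]; grind) hB₁ hB₂⟩

theorem exists_mem_of_isChain {c : Set (Set ModalFormula)} (hc : IsChain (· ⊆ ·) c)
    (hne : c.Nonempty) (h : DerivableFrom (⋃₀ c) φ) : ∃ Γ ∈ c, DerivableFrom Γ φ := by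
  induction h with
  | mem h =>
    obtain ⟨Γ, hΓ, h⟩ := h
    exact ⟨Γ, hΓ, mem h⟩
  | thm h => exact ⟨hne.some, hne.some_mem, thm h⟩
  | mp _ _ ih₁ ih₂ =>
    obtain ⟨Γ₁, hΓ₁, h₁⟩ := ih₁
    obtain ⟨Γ₂, hΓ₂, h₂⟩ := ih₂
    rcases hc.total hΓ₁ hΓ₂ with h | h
    · exact ⟨Γ₂, hΓ₂, mp (h₁.mono h) h₂⟩
    · exact ⟨Γ₁, hΓ₁, mp h₁ (h₂.mono h)⟩

end DerivableFrom

def Consistent (Γ : Set ModalFormula) : Prop := ¬ DerivableFrom Γ falsum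

theorem consistent_insert_neg {Γ : Set ModalFormula} {φ : ModalFormula}
    (h : ¬ DerivableFrom Γ φ) : Consistent (insert (neg φ) Γ) := fun h' =>
  h (h'.deduction.of_taut fun e h₀ h₁ => by simp only [neg, h₁, h₀]; grind)

theorem exists_maximal_consistent {Γ : Set ModalFormula} (h : Consistent Γ) :
    ∃ Δ, Γ ⊆ Δ ∧ Maximal Consistent Δ := by
  refine zorn_subset_nonempty {Δ | Consistent Δ} (fun c hcons hc hne => ?_) Γ h
  refine ⟨⋃₀ c, fun h => ?_, fun _ => Set.subset_sUnion_of_mem⟩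
  obtain ⟨Δ, hΔ, h⟩ := h.exists_mem_of_isChain hc hne
  exact hcons hΔ h

def CanonicalWorld : Type := {Γ : Set ModalFormula // Maximal Consistent Γ}

namespace CanonicalWorld

variable {Γ Δ Θ : CanonicalWorld} {φ ψ : ModalFormula}

theorem consistent (Γ : CanonicalWorld) : Consistent Γ.1 := Γ.2.1

theorem mem_of_derivable (h : DerivableFrom Γ.1 φ) : φ ∈ Γ.1 :=
  Γ.2.2 (fun h' => Γ.consistent (h'.deduction.mp h)) (Set.subset_insert _ _)
    (Set.mem_insert _ _)

theorem mem_of_s4Point2 (h : S4Point2 φ) : φ ∈ Γ.1 :=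
  mem_of_derivable (.thm h)

theorem mem_of_imp_mem (h : imp φ ψ ∈ Γ.1) (hφ : φ ∈ Γ.1) : ψ ∈ Γ.1 :=
  mem_of_derivable (.mp (.mem h) (.mem hφ))

theorem falsum_notMem (Γ : CanonicalWorld) : falsum ∉ Γ.1 :=
  fun h => Γ.consistent (.mem h)

theorem neg_mem_iff : neg φ ∈ Γ.1 ↔ φ ∉ Γ.1 := by
  refine ⟨fun h hφ => Γ.falsum_notMem (mem_of_imp_mem h hφ), fun h => mem_of_derivable ?_⟩
  have : ¬ Consistent (insert φ Γ.1) := fun hc =>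
    h (Γ.2.2 hc (Set.subset_insert _ _) (Set.mem_insert _ _))
  exact (not_not.1 this).deduction

theorem imp_mem_iff : imp φ ψ ∈ Γ.1 ↔ (φ ∈ Γ.1 → ψ ∈ Γ.1) := by
  refine ⟨mem_of_imp_mem, fun h => ?_⟩
  by_cases hφ : φ ∈ Γ.1
  · exact mem_of_derivable ((DerivableFrom.mem (h hφ)).of_taut
      fun e _ h₁ => by simp only [h₁]; grind)
  · exact mem_of_derivable ((DerivableFrom.mem (neg_mem_iff.2 hφ)).of_taut
      fun e h₀ h₁ => by simp only [neg, h₁, h₀]; grind)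

theorem exists_superset {Γ : Set ModalFormula} (h : Consistent Γ) :
    ∃ Δ : CanonicalWorld, Γ ⊆ Δ.1 :=
  let ⟨Δ, hΓΔ, hΔ⟩ := exists_maximal_consistent h
  ⟨⟨Δ, hΔ⟩, hΓΔ⟩

instance : Preorder CanonicalWorld where
  le Γ Δ := box ⁻¹' Γ.1 ⊆ Δ.1
  le_refl _ _ h := mem_of_imp_mem (mem_of_s4Point2 (.axT _)) h
  le_trans _ _ _ h₁ h₂ _ h := h₂ (h₁ (mem_of_imp_mem (mem_of_s4Point2 (.ax4 _)) h))

theorem box_mem_of_le (h : Γ ≤ Δ) (hφ : box φ ∈ Γ.1) : box φ ∈ Δ.1 :=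
  h (mem_of_imp_mem (mem_of_s4Point2 (.ax4 _)) hφ)

theorem box_mem_of_derivable (h : DerivableFrom (box ⁻¹' Γ.1) φ) : box φ ∈ Γ.1 :=
  mem_of_derivable (h.box.mono (Set.image_preimage_subset _ _))

theorem exists_le_notMem (h : box φ ∉ Γ.1) : ∃ Δ, Γ ≤ Δ ∧ φ ∉ Δ.1 := by
  obtain ⟨Δ, hΔ⟩ := exists_superset
    (consistent_insert_neg fun hφ => h (box_mem_of_derivable hφ))
  exact ⟨Δ, (Set.subset_insert _ _).trans hΔ, neg_mem_iff.1 (hΔ (Set.mem_insert _ _))⟩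

theorem dia_mem_of_le (h : Γ ≤ Δ) (hφ : φ ∈ Δ.1) : dia φ ∈ Γ.1 :=
  neg_mem_iff.2 fun hbox => neg_mem_iff.1 (h hbox) hφ

theorem exists_ge_ge (h₁ : Γ ≤ Δ) (h₂ : Γ ≤ Θ) : ∃ Λ, Δ ≤ Λ ∧ Θ ≤ Λ := by
  have hcons : Consistent (box ⁻¹' Δ.1 ∪ box ⁻¹' Θ.1) := fun h => by
    obtain ⟨χ, hΔ, hΘ⟩ := h.exists_of_union
    have hdia : dia (box χ) ∈ Γ.1 := dia_mem_of_le h₁ (box_mem_of_derivable hΔ)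
    have hbox : box (dia χ) ∈ Γ.1 := mem_of_imp_mem (mem_of_s4Point2 (.ax2 χ)) hdia
    exact neg_mem_iff.1 (h₂ hbox) (box_mem_of_derivable hΘ)
  obtain ⟨Λ, hΛ⟩ := exists_superset hcons
  exact ⟨Λ, Set.subset_union_left.trans hΛ, Set.subset_union_right.trans hΛ⟩

def restrict (φ : ModalFormula) (Γ : CanonicalWorld) : Set ModalFormula :=
  Γ.1 ∩ φ.subformulas

end CanonicalWorld

/-- Worlds are the traces on the subformulas of `φ` of the maximal consistent sets above `Γ₀`;
they are preordered by inclusion of boxed formulas (the transitive filtration). -/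
def Filtration (φ : ModalFormula) (Γ₀ : CanonicalWorld) : Type :=
  CanonicalWorld.restrict φ '' Set.Ici Γ₀

namespace Filtration

open CanonicalWorld

variable {φ : ModalFormula} {Γ₀ Γ Δ : CanonicalWorld}

instance : Preorder (Filtration φ Γ₀) := Preorder.lift fun S => box ⁻¹' S.1

def mk (φ : ModalFormula) (h : Γ₀ ≤ Γ) : Filtration φ Γ₀ := ⟨Γ.restrict φ, Γ, h, rfl⟩

theorem mk_le_mk (hΓ : Γ₀ ≤ Γ) (hΔ : Γ₀ ≤ Δ) (h : Γ ≤ Δ) : mk φ hΓ ≤ mk φ hΔ :=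
  fun _ hψ => ⟨box_mem_of_le h hψ.1, hψ.2⟩

instance : OrderBot (Filtration φ Γ₀) where
  bot := mk φ le_rfl
  bot_le := by
    rintro ⟨_, Γ, hΓ, rfl⟩
    exact mk_le_mk le_rfl hΓ hΓ

instance : IsDirectedOrder (Filtration φ Γ₀) where
  directed := by
    rintro ⟨_, Γ, hΓ, rfl⟩ ⟨_, Δ, hΔ, rfl⟩
    obtain ⟨Λ, hΓΛ, hΔΛ⟩ := exists_ge_ge hΓ hΔ
    exact ⟨mk φ (hΓ.trans hΓΛ), mk_le_mk hΓ _ hΓΛ, mk_le_mk hΔ _ hΔΛ⟩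

instance : Finite (Filtration φ Γ₀) :=
  Set.Finite.to_subtype <| (finite_subformulas φ).finite_subsets.subset <| by
    rintro _ ⟨Γ, _, rfl⟩
    exact Set.inter_subset_right

def valuation (φ : ModalFormula) (Γ₀ : CanonicalWorld) : ℕ → Filtration φ Γ₀ → Prop :=
  fun n S => atom n ∈ S.1

theorem modalSat_mk_iff {ψ : ModalFormula} (hψ : ψ ∈ φ.subformulas) (hΓ : Γ₀ ≤ Γ) :
    ModalSat (· ≤ ·) (valuation φ Γ₀) (mk φ hΓ) ψ ↔ ψ ∈ Γ.1 := by
  induction ψ generalizing Γ with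
  | atom n => exact ⟨And.left, fun h => ⟨h, hψ⟩⟩
  | falsum => exact iff_of_false id Γ.falsum_notMem
  | imp ψ χ ihψ ihχ =>
    obtain ⟨hψ, hχ⟩ := mem_subformulas_of_imp hψ
    rw [ModalSat, ihψ hψ hΓ, ihχ hχ hΓ, imp_mem_iff]
  | box ψ ih =>
    have hψ' := mem_subformulas_of_box hψ
    refine ⟨fun h => by_contra fun hbox => ?_, ?_⟩
    · obtain ⟨Δ, hΓΔ, hΔ⟩ := exists_le_notMem hbox
      exact hΔ ((ih hψ' (hΓ.trans hΓΔ)).1 (h _ (mk_le_mk hΓ _ hΓΔ)))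
    · rintro h ⟨_, Δ, hΔ, rfl⟩ hle
      exact (ih hψ' hΔ).2 (mem_of_imp_mem (mem_of_s4Point2 (.axT _)) (hle ⟨h, hψ⟩).1)

end Filtration

theorem S4Point2.of_forall_finite {φ : ModalFormula}
    (h : ∀ (F : Type) [Preorder F] [OrderBot F] [IsDirectedOrder F] [Finite F]
      (V : ℕ → F → Prop), ModalSat (· ≤ ·) V ⊥ φ) : S4Point2 φ := by
  by_contra hφ
  obtain ⟨Γ₀, hΓ₀⟩ := CanonicalWorld.exists_superset
    (consistent_insert_neg (Γ := ∅) fun h => hφ h.s4Point2)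
  have hsat := h (Filtration φ Γ₀) (Filtration.valuation φ Γ₀)
  exact CanonicalWorld.neg_mem_iff.1 (hΓ₀ (Set.mem_insert _ _))
    ((Filtration.modalSat_mk_iff (mem_subformulas_self φ) le_rfl).1 hsat)

structure IsPMorphism {α β : Type*} (R : α → α → Prop) (S : β → β → Prop) (f : α → β) :
    Prop where
  forth : ∀ ⦃a a'⦄, R a a' → S (f a) (f a')
  back : ∀ ⦃a b⦄, S (f a) b → ∃ a', R a a' ∧ f a' = b

namespace IsPMorphism

variable {α β γ : Type*} {R : α → α → Prop} {S : β → β → Prop} {T : γ → γ → Prop}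
  {f : α → β} {g : β → γ}

theorem comp (hg : IsPMorphism S T g) (hf : IsPMorphism R S f) : IsPMorphism R T (g ∘ f) where
  forth _ _ h := hg.forth (hf.forth h)
  back a c h := by
    obtain ⟨b, hb, rfl⟩ := hg.back h
    obtain ⟨a', ha', rfl⟩ := hf.back hb
    exact ⟨a', ha', rfl⟩

theorem subtype_val [Preorder α] {U : Set α} (hU : IsUpperSet U) :
    IsPMorphism (· ≤ ·) (· ≤ ·) (Subtype.val : U → α) where
  forth _ _ h := h
  back a b h := ⟨⟨b, hU h a.2⟩, h, rfl⟩

theorem modalSat_comp_iff (hf : IsPMorphism R S f) (V : ℕ → β → Prop) (a : α)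
    (φ : ModalFormula) : ModalSat R (fun n a => V n (f a)) a φ ↔ ModalSat S V (f a) φ := by
  induction φ generalizing a with
  | atom n | falsum => rfl
  | imp φ ψ ihφ ihψ => exact imp_congr (ihφ a) (ihψ a)
  | box φ ih =>
    refine ⟨fun h b hab => ?_, fun h a' haa' => (ih a').2 (h _ (hf.forth haa'))⟩
    obtain ⟨a', haa', rfl⟩ := hf.back hab
    exact (ih a').1 (h a' haa')

end IsPMorphism

def ButtonState (ι : Type*) : Type _ := Set ι × (ι → Bool)

def ButtonState.Extends {ι : Type*} (p q : ButtonState ι) : Prop := p.1 ⊆ q.1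

namespace ButtonState

open Set

variable {ι F : Type*} {name : ι → F}

noncomputable def pick (name : ι → F) (c : Set F) (hc : c.Nonempty) (t : ι → Bool) : F :=
  open scoped Classical in
  if h : ∃ j, t j = true ∧ name j ∈ c then name h.choose else hc.some

theorem pick_mem {c : Set F} (hc : c.Nonempty) (t : ι → Bool) : pick name c hc t ∈ c := by
  unfold pick
  split_ifs with h
  · exact h.choose_spec.2
  · exact hc.some_mem

theorem exists_pick_eq (hname : Function.Surjective name) {c : Set F} (hc : c.Nonempty)
    {y : F} (hy : y ∈ c) : ∃ t, pick name c hc t = y := by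
  classical
  obtain ⟨j, rfl⟩ := hname y
  have h : ∃ i, decide (i = j) = true ∧ name i ∈ c := ⟨j, decide_eq_true rfl, hy⟩
  refine ⟨fun i => decide (i = j), ?_⟩
  rw [pick, dif_pos h, of_decide_eq_true h.choose_spec.1]

variable [Preorder F] [OrderBot F]

def named (name : ι → F) (B : Set ι) : Set F := insert ⊥ (name '' B)

/-- Being a chain is inherited by subsets, so the labelling stays monotone after it jumps to the
final cluster. -/
def candidates (name : ι → F) (B : Set ι) : Set F :=
  open scoped Classical in
  if IsChain (· ≤ ·) (named name B) then named name B ∩ upperBounds (named name B)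
  else upperBounds univ

theorem le_of_mem_candidates {B B' : Set ι} (hB : B ⊆ B') {x y : F}
    (hx : x ∈ candidates name B) (hy : y ∈ candidates name B') : x ≤ y := by
  unfold candidates at hy
  split_ifs at hy with hB'
  · have hsub : named name B ⊆ named name B' := insert_subset_insert (image_mono hB)
    rw [candidates, if_pos (hB'.mono hsub)] at hx
    exact hy.2 (hsub hx.1)
  · exact hy (mem_univ x)

theorem exists_mem_candidates_of_le (hname : Function.Surjective name) {B : Set ι} {x y : F}
    (hx : x ∈ candidates name B) (hxy : x ≤ y) : ∃ B', B ⊆ B' ∧ y ∈ candidates name B' := by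
  unfold candidates at hx
  split_ifs at hx with hB
  · obtain ⟨j, rfl⟩ := hname y
    have hub : name j ∈ upperBounds (named name B) := fun z hz => (hx.2 hz).trans hxy
    have hnamed : named name (insert j B) = insert (name j) (named name B) := by
      simp only [named, image_insert_eq, insert_comm]
    refine ⟨insert j B, subset_insert _ _, ?_⟩
    rw [candidates, hnamed, if_pos (hB.insert fun z hz _ => Or.inr (hub hz)),
      upperBounds_insert]
    exact ⟨mem_insert _ _, le_rfl, hub⟩
  · refine ⟨B, subset_rfl, ?_⟩
    rw [candidates, if_neg hB]
    exact fun z _ => (hx (mem_univ z)).trans hxy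

theorem eq_bot_of_mem_candidates_empty {x : F} (hx : x ∈ candidates name ∅) : x = ⊥ := by
  have hchain : IsChain (· ≤ ·) (named name ∅) := by simp [named]
  rw [candidates, if_pos hchain] at hx
  simpa [named] using hx.1

variable [IsDirectedOrder F] [Finite F]

theorem candidates_nonempty (B : Set ι) : (candidates name B).Nonempty := by
  unfold candidates
  split_ifs with hB
  · obtain ⟨m, hm⟩ := (toFinite (named name B)).exists_maximal (insert_nonempty _ _)
    refine ⟨m, hm.1, fun x hx => ?_⟩
    rcases hB.total hx hm.1 with h | h
    · exact h
    · exact hm.2 hx h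
  · obtain ⟨M, hM⟩ := Finite.exists_le (id : F → F)
    exact ⟨M, fun x _ => hM x⟩

noncomputable def label (name : ι → F) (p : ButtonState ι) : F :=
  pick name (candidates name p.1) (candidates_nonempty p.1) p.2

theorem isPMorphism_label (hname : Function.Surjective name) :
    IsPMorphism Extends (· ≤ ·) (label name) where
  forth _ _ h := le_of_mem_candidates h (pick_mem _ _) (pick_mem _ _)
  back p y h := by
    obtain ⟨B', hB', hy⟩ := exists_mem_candidates_of_le hname (pick_mem _ _) h
    obtain ⟨t, ht⟩ := exists_pick_eq hname (candidates_nonempty B') hy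
    exact ⟨(B', t), hB', ht⟩

theorem label_of_fst_eq_empty {p : ButtonState ι} (hp : p.1 = ∅) : label name p = ⊥ := by
  obtain ⟨B, t⟩ := p
  subst hp
  exact eq_bot_of_mem_candidates_empty (pick_mem _ _)

end ButtonState

section Potentialist
variable {W : Type*} [Preorder W]

/-- A predicate on worlds is persistent if once true it stays true in all
larger worlds. -/
def Persistent (b : W → Prop) : Prop := ∀ w v : W, b w → w ≤ v → b v

/-- A button: a persistent predicate that can always be made true. -/
def IsButton (b : W → Prop) : Prop :=
  Persistent b ∧ ∀ w : W, ∃ v, w ≤ v ∧ b v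

/-- A switch: a predicate that can always be made true and can always be made
false. -/
def IsSwitch (s : W → Prop) : Prop :=
  ∀ w : W, (∃ v, w ≤ v ∧ s v) ∧ (∃ v, w ≤ v ∧ ¬ s v)

/-- A family of `n` buttons and `n` switches is independent at `w₀` if no
button is pushed at `w₀` and, from any world above `w₀`, the buttons and
switches can be set in any pattern extending the already-pushed buttons. -/
def IndependentFamily (n : ℕ) (b s : Fin n → W → Prop) (w₀ : W) : Prop :=
  (∀ i, ¬ b i w₀) ∧
  ∀ w, w₀ ≤ w → ∀ B : Set (Fin n), {i | b i w} ⊆ B → ∀ t : Fin n → Bool,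
    ∃ u, w ≤ u ∧ (∀ i, b i u ↔ i ∈ B) ∧ (∀ j, s j u ↔ t j = true)

/-- Pointwise finite Boolean combinations of a family of predicates. -/
inductive BoolComb (F : Set (W → Prop)) : (W → Prop) → Prop
  | base {p} : p ∈ F → BoolComb F p
  | top : BoolComb F (fun _ => True)
  | compl {p} : BoolComb F p → BoolComb F (fun w => ¬ p w)
  | inter {p q} : BoolComb F p → BoolComb F q →
      BoolComb F (fun w => p w ∧ q w)

namespace BoolComb

variable {α : Type*} {F : Set (α → Prop)} {p q : α → Prop}

theorem of_iff (hp : BoolComb F p) (h : ∀ w, p w ↔ q w) : BoolComb F q :=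
  funext (fun w => propext (h w)) ▸ hp

theorem const (F : Set (α → Prop)) (c : Prop) : BoolComb F fun _ => c := by
  by_cases hc : c
  · exact top.of_iff fun _ => by simp [hc]
  · exact top.compl.of_iff fun _ => by simp [hc]

theorem or (hp : BoolComb F p) (hq : BoolComb F q) : BoolComb F fun w => p w ∨ q w :=
  (hp.compl.inter hq.compl).compl.of_iff fun _ => by tauto

/-- Shannon expansion on the first coordinate. -/
theorem comp_fin {m : ℕ} {p : Fin m → α → Prop} (hp : ∀ i, BoolComb F (p i))
    (P : (Fin m → Prop) → Prop) : BoolComb F fun w => P fun i => p i w := by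
  induction m with
  | zero => exact (const F (P Fin.elim0)).of_iff fun w => by rw [Subsingleton.elim Fin.elim0]
  | succ m ih =>
    have hP : ∀ c : Prop, BoolComb F fun w => P (Fin.cons c fun i => p i.succ w) :=
      fun c => ih (fun i => hp i.succ) fun v => P (Fin.cons c v)
    refine ((hp 0).inter (hP True) |>.or ((hp 0).compl.inter (hP False))).of_iff fun w => ?_
    have hcons : (fun i => p i w) = Fin.cons (p 0 w) fun i => p i.succ w :=
      (Fin.cons_self_tail _).symm
    rw [hcons]
    by_cases h : p 0 w <;> simp [h]

theorem comp {κ : Type*} [Finite κ] {p : κ → α → Prop} (hp : ∀ k, BoolComb F (p k))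
    (P : (κ → Prop) → Prop) : BoolComb F fun w => P fun k => p k w := by
  obtain ⟨m, ⟨e⟩⟩ := Finite.exists_equiv_fin κ
  exact (comp_fin (fun i => hp (e.symm i)) fun v => P (v ∘ e)).of_iff fun w => by
    simp [Function.comp_def]

end BoolComb

namespace ButtonState

variable {ι α : Type*}

noncomputable def ofWorld (b s : ι → α → Prop) (w : α) : ButtonState ι :=
  open scoped Classical in ({i | b i w}, fun j => decide (s j w))

theorem boolComb_comp_ofWorld [Finite ι] (b s : ι → α → Prop) (P : ButtonState ι → Prop) :
    BoolComb (Set.range b ∪ Set.range s) fun w => P (ofWorld b s w) := by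
  classical
  have hatoms : ∀ k, BoolComb (Set.range b ∪ Set.range s) (Sum.elim b s k) := by
    rintro (i | j)
    · exact .base (.inl ⟨i, rfl⟩)
    · exact .base (.inr ⟨j, rfl⟩)
  exact (BoolComb.comp hatoms fun v => P ({i | v (.inl i)}, fun j => decide (v (.inr j)))).of_iff
    fun _ => Iff.rfl

theorem isPMorphism_ofWorld {n : ℕ} {b s : Fin n → W → Prop} {w₀ : W}
    (hb : ∀ i, Persistent (b i)) (hind : IndependentFamily n b s w₀) :
    IsPMorphism (· ≤ ·) Extends fun w : Set.Ici w₀ => ofWorld b s w where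
  forth w v hwv i hi := hb i w v hi hwv
  back w p h := by
    obtain ⟨u, hwu, hbu, hsu⟩ := hind.2 w w.2 p.1 h p.2
    refine ⟨⟨u, w.2.trans hwu⟩, hwu, Prod.ext (Set.ext hbu) (funext fun j => ?_)⟩
    simp [ofWorld, hsu j]

end ButtonState

theorem buttons_and_switches_give_S4Point2_general
    (b s : (n : ℕ) → Fin n → W → Prop) (w₀ : ℕ → W)
    (hb : ∀ n i, IsButton (b n i))
    (hind : ∀ n, IndependentFamily n (b n) (s n) (w₀ n))
    (φ : ModalFormula)
    (hφ : ∀ (n : ℕ) (V : ℕ → W → Prop),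
      (∀ k, BoolComb (Set.range (b n) ∪ Set.range (s n)) (V k)) →
      ∀ w : W, ModalSat (· ≤ ·) V w φ) :
    S4Point2 φ := by
  refine S4Point2.of_forall_finite fun F _ _ _ _ V => ?_
  let n := Nat.card F
  let label : ButtonState (Fin n) → F := ButtonState.label (Finite.equivFin F).symm
  have hlabel : IsPMorphism (· ≤ ·) (· ≤ ·) fun w : Set.Ici (w₀ n) =>
      label (ButtonState.ofWorld (b n) (s n) w) :=
    (ButtonState.isPMorphism_label (Finite.equivFin F).symm.surjective).comp
      (ButtonState.isPMorphism_ofWorld (fun i => (hb n i).1) (hind n))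
  have hroot : label (ButtonState.ofWorld (b n) (s n) (w₀ n)) = ⊥ :=
    ButtonState.label_of_fst_eq_empty (Set.eq_empty_of_forall_notMem (hind n).1)
  let Vw : ℕ → W → Prop := fun k w => V k (label (ButtonState.ofWorld (b n) (s n) w))
  have hsat := hφ n Vw
    (fun k => ButtonState.boolComb_comp_ofWorld _ _ fun p => V k (label p)) (w₀ n)
  rw [← hroot]
  exact (hlabel.modalSat_comp_iff V ⟨w₀ n, le_rfl⟩ φ).1
    (((IsPMorphism.subtype_val (isUpperSet_Ici (w₀ n))).modalSat_comp_iff Vw _ φ).2 hsat)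

/-- Hamkins–Löwe: if a potentialist frame admits, for each `n`, an
independent family of `n` buttons and `n` switches, then any modal formula
valid at every world under all valuations by Boolean combinations of these
families belongs to S4.2. -/
theorem buttons_and_switches_give_S4Point2
    (b s : (n : ℕ) → Fin n → W → Prop) (w₀ : ℕ → W)
    (hb : ∀ n i, IsButton (b n i)) (hs : ∀ n j, IsSwitch (s n j))
    (hind : ∀ n, IndependentFamily n (b n) (s n) (w₀ n))
    (φ : ModalFormula)
    (hφ : ∀ (n : ℕ) (V : ℕ → W → Prop),
      (∀ k, BoolComb (Set.range (b n) ∪ Set.range (s n)) (V k)) →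
      ∀ w : W, ModalSat (· ≤ ·) V w φ) :
    S4Point2 φ :=
  buttons_and_switches_give_S4Point2_general b s w₀ hb hind φ hφ

end Potentialist
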